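/- arXiv:1806.04602 — 4 statements merged into one kernel-verified Lean document; each statement's English description precedes it below -/
import Mathlib

section
/- Let P be a stochastic matrix on a finite state space Ω reversible with respect to μ, and let {P_{A_i}} be stochastic matrices reversible w.r.t. μ, each monotone, with P ≤ P_{A_i} for all i (meaning ⟨Pf, g⟩_μ ≤ ⟨P_{A_i}f, g⟩_μ for all increasing positive f, g). If P is monotone, then for all t ≥ 1 and all increasing positive functions f, g: ⟨f, Pᵗ g⟩_μ ≤ ⟨f, P_{A₁}P_{A₂}⋯P_{A_t} g⟩_μ. -/
/-!
Peel the factors off on the left. Reversibility of `P` gives `⟨f, P Pⁿ g⟩ = ⟨P f, Pⁿ g⟩`, and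
`P f` is again increasing and positive, so induction replaces `Pⁿ` by the product `L` of the
remaining factors. Moving `P` back gives `⟨P (L g), f⟩`, and since monotone and stochastic
matrices form monoids, `L g` is increasing and positive, so `P ≤ Q` replaces `P` by the first
factor `Q`.
-/

open Finset

namespace Matrix

def monotoneSubmonoid (R Ω : Type*) [Fintype Ω] [DecidableEq Ω] [Preorder Ω] [Semiring R]
    [Preorder R] : Submonoid (Matrix Ω Ω R) where
  carrier := {M | ∀ f : Ω → R, Monotone f → Monotone (M *ᵥ f)}
  one_mem' f hf := by simpa using hf
  mul_mem' {M N} hM hN f hf := by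
    rw [← mulVec_mulVec]
    exact hM _ (hN f hf)

variable {Ω R : Type*} [Fintype Ω]

lemma pos_mulVec_of_mem_rowStochastic [DecidableEq Ω] [Semiring R] [PartialOrder R]
    [IsStrictOrderedRing R] {M : Matrix Ω Ω R} (hM : M ∈ rowStochastic R Ω) {f : Ω → R}
    (hf : ∀ σ, 0 < f σ) (σ : Ω) : 0 < (M *ᵥ f) σ := by
  obtain ⟨τ, -, hτ⟩ := exists_ne_zero_of_sum_ne_zero
    ((sum_row_of_mem_rowStochastic hM σ).trans_ne one_ne_zero)
  exact sum_pos' (fun τ _ => mul_nonneg (nonneg_of_mem_rowStochastic hM) (hf τ).le)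
    ⟨τ, mem_univ τ, mul_pos ((nonneg_of_mem_rowStochastic hM).lt_of_ne' hτ) (hf τ)⟩

def IsReversible [Mul R] (M : Matrix Ω Ω R) (μ : Ω → R) : Prop :=
  ∀ σ τ, μ σ * M σ τ = μ τ * M τ σ

end Matrix

section

open Matrix

variable {Ω R : Type*} [Fintype Ω]

def weightedInner [Mul R] [AddCommMonoid R] (μ f g : Ω → R) : R :=
  ∑ σ, μ σ * f σ * g σ

lemma weightedInner_comm [CommSemiring R] (μ f g : Ω → R) :
    weightedInner μ f g = weightedInner μ g f :=
  sum_congr rfl fun _ _ => mul_right_comm _ _ _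

lemma weightedInner_mulVec_right [CommSemiring R] {M : Matrix Ω Ω R} {μ : Ω → R}
    (hM : M.IsReversible μ) (f g : Ω → R) :
    weightedInner μ f (M *ᵥ g) = weightedInner μ (M *ᵥ f) g := by
  simp only [weightedInner, mulVec, dotProduct, mul_sum, sum_mul]
  rw [sum_comm]
  refine sum_congr rfl fun τ _ => sum_congr rfl fun σ _ => ?_
  calc μ σ * f σ * (M σ τ * g τ) = μ σ * M σ τ * f σ * g τ := by ring
    _ = μ τ * M τ σ * f σ * g τ := by rw [hM σ τ]
    _ = μ τ * (M τ σ * f σ) * g τ := by ring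

variable [DecidableEq Ω] [PartialOrder Ω] [CommSemiring R] [PartialOrder R]
  [IsStrictOrderedRing R]

theorem weightedInner_pow_mulVec_le_list_prod_mulVec {μ : Ω → R} {P : Matrix Ω Ω R}
    (hPs : P ∈ rowStochastic R Ω) (hPm : P ∈ monotoneSubmonoid R Ω) (hPrev : P.IsReversible μ)
    {L : List (Matrix Ω Ω R)} (hLs : ∀ Q ∈ L, Q ∈ rowStochastic R Ω)
    (hLm : ∀ Q ∈ L, Q ∈ monotoneSubmonoid R Ω)
    (hle : ∀ Q ∈ L, ∀ f g : Ω → R, Monotone f → Monotone g → (∀ σ, 0 < f σ) →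
      (∀ σ, 0 < g σ) → weightedInner μ (P *ᵥ f) g ≤ weightedInner μ (Q *ᵥ f) g)
    {f g : Ω → R} (hf : Monotone f) (hg : Monotone g) (hfpos : ∀ σ, 0 < f σ)
    (hgpos : ∀ σ, 0 < g σ) :
    weightedInner μ f (P ^ L.length *ᵥ g) ≤ weightedInner μ f (L.prod *ᵥ g) := by
  induction L generalizing f with
  | nil => simp
  | cons Q L ih =>
    simp only [List.forall_mem_cons] at hLs hLm hle
    have hLg : Monotone (L.prod *ᵥ g) := Submonoid.list_prod_mem _ hLm.2 g hg
    have hLgpos : ∀ σ, 0 < (L.prod *ᵥ g) σ :=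
      pos_mulVec_of_mem_rowStochastic (Submonoid.list_prod_mem _ hLs.2) hgpos
    calc weightedInner μ f (P ^ (Q :: L).length *ᵥ g)
        = weightedInner μ (P *ᵥ f) (P ^ L.length *ᵥ g) := by
          rw [List.length_cons, pow_succ', ← mulVec_mulVec, weightedInner_mulVec_right hPrev]
      _ ≤ weightedInner μ (P *ᵥ f) (L.prod *ᵥ g) :=
          ih hLs.2 hLm.2 hle.2 (hPm f hf) (pos_mulVec_of_mem_rowStochastic hPs hfpos)
      _ = weightedInner μ (P *ᵥ (L.prod *ᵥ g)) f := by
          rw [← weightedInner_mulVec_right hPrev, weightedInner_comm]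
      _ ≤ weightedInner μ (Q *ᵥ (L.prod *ᵥ g)) f := hle.1 _ _ hLg hf hLgpos hfpos
      _ = weightedInner μ f ((Q :: L).prod *ᵥ g) := by
          rw [weightedInner_comm, List.prod_cons, mulVec_mulVec]

end

theorem stmt_3_general {Ω : Type*} [Fintype Ω] [DecidableEq Ω] [PartialOrder Ω]
    (μ : Ω → ℝ)
    (P : Matrix Ω Ω ℝ) (Pa : ℕ → Matrix Ω Ω ℝ)
    (hPnonneg : ∀ σ τ, 0 ≤ P σ τ) (hProw : ∀ σ, ∑ τ, P σ τ = 1)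
    (hPanonneg : ∀ i σ τ, 0 ≤ Pa i σ τ) (hParow : ∀ i σ, ∑ τ, Pa i σ τ = 1)
    (hPrev : ∀ σ τ, μ σ * P σ τ = μ τ * P τ σ)
    (hPmono : ∀ f : Ω → ℝ, Monotone f → Monotone (P.mulVec f))
    (hPamono : ∀ i, ∀ f : Ω → ℝ, Monotone f → Monotone ((Pa i).mulVec f))
    (hle : ∀ i, ∀ f g : Ω → ℝ, Monotone f → Monotone g →
      (∀ σ, 0 < f σ) → (∀ σ, 0 < g σ) →
      ∑ σ, μ σ * P.mulVec f σ * g σ ≤ ∑ σ, μ σ * (Pa i).mulVec f σ * g σ)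
    (t : ℕ)
    (f g : Ω → ℝ) (hf : Monotone f) (hg : Monotone g)
    (hfpos : ∀ σ, 0 < f σ) (hgpos : ∀ σ, 0 < g σ) :
    ∑ σ, μ σ * f σ * (P ^ t).mulVec g σ ≤
      ∑ σ, μ σ * f σ * (((List.range t).map Pa).prod).mulVec g σ := by
  have key := weightedInner_pow_mulVec_le_list_prod_mulVec
    (Matrix.mem_rowStochastic_iff_sum.2 ⟨hPnonneg, hProw⟩) hPmono hPrev
    (L := (List.range t).map Pa)
    (List.forall_mem_map.2 fun i _ => Matrix.mem_rowStochastic_iff_sum.2 ⟨hPanonneg i, hParow i⟩)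
    (List.forall_mem_map.2 fun i _ => hPamono i) (List.forall_mem_map.2 fun i _ => hle i)
    hf hg hfpos hgpos
  rwa [List.length_map, List.length_range] at key

/-- If `P` is monotone and reversible w.r.t. `μ`, and `Pa i` are monotone
stochastic matrices reversible w.r.t. `μ` with `P ≤ Pa i` (in the sense of increasing
positive test functions), then for all `t ≥ 1` and increasing positive `f, g`:
`⟨f, Pᵗ g⟩_μ ≤ ⟨f, Pa 0 ⋯ Pa (t-1) g⟩_μ`. -/
theorem stmt_3 {Ω : Type*} [Fintype Ω] [DecidableEq Ω] [PartialOrder Ω]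
    (μ : Ω → ℝ) (hμpos : ∀ σ, 0 < μ σ) (hμsum : ∑ σ, μ σ = 1)
    (P : Matrix Ω Ω ℝ) (Pa : ℕ → Matrix Ω Ω ℝ)
    (hPnonneg : ∀ σ τ, 0 ≤ P σ τ) (hProw : ∀ σ, ∑ τ, P σ τ = 1)
    (hPanonneg : ∀ i σ τ, 0 ≤ Pa i σ τ) (hParow : ∀ i σ, ∑ τ, Pa i σ τ = 1)
    (hPrev : ∀ σ τ, μ σ * P σ τ = μ τ * P τ σ)
    (hParev : ∀ i σ τ, μ σ * Pa i σ τ = μ τ * Pa i τ σ)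
    (hPmono : ∀ f : Ω → ℝ, Monotone f → Monotone (P.mulVec f))
    (hPamono : ∀ i, ∀ f : Ω → ℝ, Monotone f → Monotone ((Pa i).mulVec f))
    (hle : ∀ i, ∀ f g : Ω → ℝ, Monotone f → Monotone g →
      (∀ σ, 0 < f σ) → (∀ σ, 0 < g σ) →
      ∑ σ, μ σ * P.mulVec f σ * g σ ≤ ∑ σ, μ σ * (Pa i).mulVec f σ * g σ)
    (t : ℕ) (ht : 1 ≤ t)
    (f g : Ω → ℝ) (hf : Monotone f) (hg : Monotone g)
    (hfpos : ∀ σ, 0 < f σ) (hgpos : ∀ σ, 0 < g σ) :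
    ∑ σ, μ σ * f σ * (P ^ t).mulVec g σ ≤
      ∑ σ, μ σ * f σ * (((List.range t).map Pa).prod).mulVec g σ :=
  stmt_3_general μ P Pa hPnonneg hProw hPanonneg hParow hPrev hPmono hPamono hle t f g hf hg hfpos
    hgpos
end

section
/- Let Q be a stochastic matrix on a finite set Ω_J, reversible with respect to a probability distribution ν, satisfying Q = Q². Suppose that for every ω ∈ Ω_J the distribution ρ_ω(·) = Q(ω, ·) is positively correlated (i.e., E_{ρ_ω}[fg] ≥ E_{ρ_ω}[f]·E_{ρ_ω}[g] for all increasing f, g). Then for any two increasing functions f̂₁, f̂₂ : Ω_J → ℝ: ⟨Qf̂₁, Qf̂₂⟩_ν ≤ ⟨f̂₁, f̂₂⟩_ν. -/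
open Finset

/-- If `Q` is reversible w.r.t. `ν`, idempotent (`Q = Q²`), and every row
`ρ_ω = Q(ω,·)` is positively correlated, then for increasing `f̂₁, f̂₂`:
`⟨Qf̂₁, Qf̂₂⟩_ν ≤ ⟨f̂₁, f̂₂⟩_ν`. -/
theorem stmt_5 {Ω : Type*} [Fintype Ω] [DecidableEq Ω] [PartialOrder Ω]
    (ν : Ω → ℝ) (hνpos : ∀ ω, 0 < ν ω) (hνsum : ∑ ω, ν ω = 1)
    (Q : Matrix Ω Ω ℝ)
    (hQnonneg : ∀ ω ω', 0 ≤ Q ω ω') (hQrow : ∀ ω, ∑ ω', Q ω ω' = 1)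
    (hrev : ∀ ω ω', ν ω * Q ω ω' = ν ω' * Q ω' ω)
    (hidem : Q * Q = Q)
    (hposcorr : ∀ ω, ∀ f g : Ω → ℝ, Monotone f → Monotone g →
      (∑ x, Q ω x * f x) * (∑ x, Q ω x * g x) ≤ ∑ x, Q ω x * (f x * g x))
    (f1 f2 : Ω → ℝ) (hf1 : Monotone f1) (hf2 : Monotone f2) :
    ∑ ω, ν ω * (Q.mulVec f1 ω * Q.mulVec f2 ω) ≤ ∑ ω, ν ω * (f1 ω * f2 ω) := by
  calc ∑ ω, ν ω * (Q.mulVec f1 ω * Q.mulVec f2 ω)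
      ≤ ∑ ω, ν ω * ∑ x, Q ω x * (f1 x * f2 x) := by
        refine Finset.sum_le_sum fun ω _ => ?_
        exact mul_le_mul_of_nonneg_left (hposcorr ω f1 f2 hf1 hf2) (hνpos ω).le
    _ = ∑ x, (∑ ω, ν ω * Q ω x) * (f1 x * f2 x) := by
        simp_rw [Finset.mul_sum, Finset.sum_mul]
        rw [Finset.sum_comm]
        simp [mul_assoc]
    _ = ∑ x, ν x * (f1 x * f2 x) := by
        refine Finset.sum_congr rfl fun x _ => ?_
        have : ∑ ω, ν ω * Q ω x = ν x := by
          simp_rw [fun ω => hrev ω x, ← Finset.mul_sum, hQrow x, mul_one]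
        rw [this]
end

section
/- The Gibbs distribution of the ferromagnetic Ising model on a finite graph G = (V, E) at inverse temperature β > 0 is positively correlated: for any two increasing functions f, g : {+,−}^V → ℝ, E_μ[fg] ≥ E_μ[f]·E_μ[g], where μ(σ) ∝ exp(β Σ_{{u,v}∈E} σ(u)σ(v)). -/
open Finset

/-- The Ising weight `w(σ) = exp(β Σ_{{u,v}∈E} σ(u)σ(v))`, with spins `± 1` encoded
by `Bool` (`true ↦ +1`, `false ↦ −1`). -/
noncomputable def isingWeight {V : Type*} [Fintype V] [DecidableEq V]
    (G : SimpleGraph V) [DecidableRel G.Adj] (β : ℝ) (σ : V → Bool) : ℝ :=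
  Real.exp (β * ∑ e ∈ G.edgeFinset,
    Sym2.lift ⟨fun u v => (if σ u then (1 : ℝ) else -1) * (if σ v then (1 : ℝ) else -1),
      fun u v => mul_comm _ _⟩ e)

lemma spin_supermod (x y z w : Bool) :
    (if x then (1:ℝ) else -1) * (if y then (1:ℝ) else -1)
      + (if z then (1:ℝ) else -1) * (if w then (1:ℝ) else -1)
    ≤ (if x ⊓ z then (1:ℝ) else -1) * (if y ⊓ w then (1:ℝ) else -1)
      + (if x ⊔ z then (1:ℝ) else -1) * (if y ⊔ w then (1:ℝ) else -1) := by
  cases x <;> cases y <;> cases z <;> cases w <;> simp <;> norm_num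

lemma isingWeight_logSupermod {V : Type*} [Fintype V] [DecidableEq V]
    (G : SimpleGraph V) [DecidableRel G.Adj] (β : ℝ) (hβ : 0 < β) (a b : V → Bool) :
    isingWeight G β a * isingWeight G β b ≤
      isingWeight G β (a ⊓ b) * isingWeight G β (a ⊔ b) := by
  unfold isingWeight
  rw [← Real.exp_add, ← Real.exp_add, ← mul_add, ← mul_add]
  apply Real.exp_le_exp.2
  apply mul_le_mul_of_nonneg_left _ hβ.le
  rw [← Finset.sum_add_distrib, ← Finset.sum_add_distrib]
  apply Finset.sum_le_sum
  intro e _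
  induction e using Sym2.ind with
  | _ u v =>
    simp only [Sym2.lift_mk, Pi.inf_apply, Pi.sup_apply]
    exact spin_supermod (a u) (a v) (b u) (b v)

/-- FKG for the ferromagnetic Ising model: the Gibbs distribution
`μ = w/Z` is positively correlated; equivalently `(Σ w f)(Σ w g) ≤ (Σ w)(Σ w fg)`
for increasing `f, g`. -/
theorem stmt_7 {V : Type*} [Fintype V] [DecidableEq V]
    (G : SimpleGraph V) [DecidableRel G.Adj] (β : ℝ) (hβ : 0 < β)
    (f g : (V → Bool) → ℝ) (hf : Monotone f) (hg : Monotone g) :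
    (∑ σ : V → Bool, isingWeight G β σ * f σ) *
      (∑ σ : V → Bool, isingWeight G β σ * g σ) ≤
    (∑ σ : V → Bool, isingWeight G β σ) *
      ∑ σ : V → Bool, isingWeight G β σ * (f σ * g σ) := by
  classical
  set μ : (V → Bool) → ℝ := isingWeight G β with hμdef
  have hμ0 : 0 ≤ μ := fun σ => (Real.exp_pos _).le
  -- shift constants making f, g nonnegative
  set Cf : ℝ := ∑ σ : V → Bool, |f σ| with hCf
  set Cg : ℝ := ∑ σ : V → Bool, |g σ| with hCg
  have hf0 : 0 ≤ fun σ => f σ + Cf := by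
    intro σ
    have : |f σ| ≤ Cf := Finset.single_le_sum (fun τ _ => abs_nonneg (f τ)) (Finset.mem_univ σ)
    have := neg_abs_le (f σ)
    simp only [Pi.zero_apply]
    linarith
  have hg0 : 0 ≤ fun σ => g σ + Cg := by
    intro σ
    have : |g σ| ≤ Cg := Finset.single_le_sum (fun τ _ => abs_nonneg (g τ)) (Finset.mem_univ σ)
    have := neg_abs_le (g σ)
    simp only [Pi.zero_apply]
    linarith
  have key := fkg (fun σ => f σ + Cf) (fun σ => g σ + Cg) μ hμ0 hf0 hg0
    (fun a b hab => by dsimp only; linarith [hf hab]) (fun a b hab => by dsimp only; linarith [hg hab])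
    (fun a b => isingWeight_logSupermod G β hβ a b)
  set A : ℝ := ∑ σ : V → Bool, μ σ with hA
  set F : ℝ := ∑ σ : V → Bool, μ σ * f σ with hF
  set Gs : ℝ := ∑ σ : V → Bool, μ σ * g σ with hG
  set P : ℝ := ∑ σ : V → Bool, μ σ * (f σ * g σ) with hP
  have e1 : (∑ σ : V → Bool, μ σ * (f σ + Cf)) = F + Cf * A := by
    rw [hF, hA, Finset.mul_sum, ← Finset.sum_add_distrib]
    apply Finset.sum_congr rfl; intro σ _; ring
  have e2 : (∑ σ : V → Bool, μ σ * (g σ + Cg)) = Gs + Cg * A := by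
    rw [hG, hA, Finset.mul_sum, ← Finset.sum_add_distrib]
    apply Finset.sum_congr rfl; intro σ _; ring
  have e3 : (∑ σ : V → Bool, μ σ * ((f σ + Cf) * (g σ + Cg)))
      = P + Cf * Gs + Cg * F + Cf * Cg * A := by
    rw [hP, hG, hF, hA, Finset.mul_sum, Finset.mul_sum, Finset.mul_sum,
      ← Finset.sum_add_distrib, ← Finset.sum_add_distrib, ← Finset.sum_add_distrib]
    apply Finset.sum_congr rfl; intro σ _; ring
  rw [e1, e2, e3] at key
  nlinarith [key]
end

section
/- The Isolated-vertex dynamics for the ferromagnetic Ising model is monotone: there exists a grand coupling of the chains started from all initial configurations such that if X_t^σ ≥ X_t^τ then X_{t+1}^σ ≥ X_{t+1}^τ. -/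
open Finset
open scoped Classical

/-- The Isolated-vertex dynamics is monotone: the grand coupling which
uses the same uniform `[0,1]` edge labels `r` and the same uniform spins `s` for all
copies (a vertex is isolated iff every incident monochromatic edge has label
`> 1 − e^{−2β}`; isolated vertices get spin `s v`, others keep their spin)
preserves the coordinatewise order on configurations (`Bool` with `− = false < true = +`). -/
theorem stmt_9 {V : Type*} [Fintype V] [DecidableEq V]
    (G : SimpleGraph V) [DecidableRel G.Adj] (β : ℝ) (hβ : 0 < β)
    (step : (V → Bool) → (Sym2 V → ℝ) → (V → Bool) → (V → Bool))
    (hstep : ∀ (X : V → Bool) (r : Sym2 V → ℝ) (s : V → Bool) (v : V),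
      step X r s v =
        if ∀ u, G.Adj u v → ¬ (X u = X v ∧ r s(u, v) ≤ 1 - Real.exp (-2 * β))
        then s v else X v) :
    ∀ (r : Sym2 V → ℝ) (s : V → Bool) (X Y : V → Bool),
      Y ≤ X → step Y r s ≤ step X r s := by
  intro r s X Y hYX v
  have hv := hYX v
  rw [hstep, hstep]
  by_cases hX : ∀ u, G.Adj u v → ¬ (X u = X v ∧ r s(u, v) ≤ 1 - Real.exp (-2 * β)) <;>
    by_cases hY : ∀ u, G.Adj u v → ¬ (Y u = Y v ∧ r s(u, v) ≤ 1 - Real.exp (-2 * β))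
  · rw [if_pos hX, if_pos hY]
  · rw [if_pos hX, if_neg hY]
    push_neg at hY
    obtain ⟨u, hadj, heq, hr⟩ := hY
    cases hYv : Y v with
    | false => simp
    | true =>
      exfalso
      have hXv : X v = true := by
        have := hYX v; rw [hYv] at this; exact Bool.eq_true_of_true_le this
      have hXu : X u = true := by
        have := hYX u; rw [hYv] at heq; rw [heq] at this
        exact Bool.eq_true_of_true_le this
      exact hX u hadj ⟨by rw [hXu, hXv], hr⟩
  · rw [if_neg hX, if_pos hY]
    push_neg at hX
    obtain ⟨u, hadj, heq, hr⟩ := hX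
    cases hXv : X v with
    | true => simp
    | false =>
      exfalso
      have hYv : Y v = false := by
        have := hYX v; rw [hXv] at this; revert this; cases Y v <;> simp
      have hYu : Y u = false := by
        have := hYX u; rw [hXv] at heq; rw [heq] at this; revert this
        cases Y u <;> simp
      exact hY u hadj ⟨by rw [hYu, hYv], hr⟩
  · rw [if_neg hX, if_neg hY]; exact hv
end
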